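/- arXiv:1208.3501 — 2 statements merged into one kernel-verified Lean document; each statement's English description precedes it below -/
import Mathlib

section
/- Let (X, F, μ, T) be a non-trivial ergodic subshift with Borel σ-algebra F, and let S be a self-homeomorphism of a compact metric space Y with Borel σ-algebra B. Suppose ξ is a μ-joining (a (T×S)-invariant measure on X×Y with X-marginal μ) satisfying: (i) T_X ⊗ B ⊆ F ⊗ T_Y mod ξ and (ii) F ⊗ T_Y ⊆ T_X ⊗ B mod ξ, where T_X and T_Y are the trivial σ-algebras. Then there exists an embedding Ψ: X → Y of (X, T, μ) into (Y, S) with ξ(F × B) = μ(F ∩ Ψ^{−1}(B)) for all F ∈ F, B ∈ B. Conversely, if Ψ is an embedding of (X, T, μ) into (Y, S), then the measure ξ defined by ξ(F × B) = μ(F ∩ Ψ^{−1}(B)) satisfies conditions (i) and (ii). -/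
open MeasureTheory Filter Set
open scoped ENNReal symmDiff

/-- `Ψ` is an embedding of the measure-preserving system `(X, μ, T)` into `(Y, S)`. -/
def IsMeasEmbedding {X Y : Type*} [MeasurableSpace X] [MeasurableSpace Y]
    (μ : Measure X) (T : X → X) (S : Y → Y) (Ψ : X → Y) : Prop :=
  Measurable Ψ ∧ ∃ X' : Set X, MeasurableSet X' ∧ μ X'ᶜ = 0 ∧ Set.InjOn Ψ X' ∧
    ∀ x ∈ X', Ψ (T x) = S (Ψ x)

/-- `m₁ ⊆ m₂ mod ξ`: every `m₁`-measurable set agrees with an `m₂`-measurable set up to a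
`ξ`-null symmetric difference. -/
def SubAlgMod {Z : Type*} [MeasurableSpace Z] (ξ : Measure Z)
    (m₁ m₂ : MeasurableSpace Z) : Prop :=
  ∀ s : Set Z, MeasurableSet[m₁] s → ∃ t : Set Z, MeasurableSet[m₂] t ∧ ξ (s ∆ t) = 0

/-- The shift map on bi-infinite sequences. -/
def fullShift {A : Type*} : (ℤ → A) → (ℤ → A) := fun x n => x (n + 1)

noncomputable instance (k : ℕ) : MetricSpace (Fin k) :=
  MetricSpace.induced (fun i : Fin k => (i : ℝ))
    (fun a b h => Fin.val_injective (Nat.cast_injective h)) inferInstance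

/-- The standard metric on the full shift over a finite alphabet. -/
noncomputable instance (k : ℕ) : MetricSpace (ℤ → Fin k) := PiCountable.metricSpace

instance (k : ℕ) : MeasurableSpace (ℤ → Fin k) := borel _
instance (k : ℕ) : BorelSpace (ℤ → Fin k) := ⟨rfl⟩

/-! Condition (i) says that the `Y`-coordinate is `ξ`-a.e. determined by the `X`-coordinate:
coding a countable generating family of Borel sets of `Y` as a point of the Cantor space turns
this into a Borel map `Ψ` with `Ψ x = y` for `ξ`-a.e. `(x, y)`, so `ξ` is the graph measure of
`Ψ` over `μ`. Symmetrically (ii) gives a Borel `Φ` with `Φ y = x` a.e., which is a left inverse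
of `Ψ` `μ`-a.e., and the `T × S`-invariance of `ξ` makes `Ψ` equivariant a.e. Conversely, the
graph measure of a Borel map satisfies (i) trivially and, when the map is injective, also (ii)
by the Lusin–Souslin theorem. -/

open MeasurableSpace

theorem exists_measurable_ae_comp_eq_of_subAlgMod {Z α β : Type*} [MeasurableSpace Z]
    [mα : MeasurableSpace α] [mβ : MeasurableSpace β] [StandardBorelSpace β] [Nonempty β]
    {ξ : Measure Z} {f : Z → α} {g : Z → β} (h : SubAlgMod ξ (mβ.comap g) (mα.comap f)) :
    ∃ Ψ : α → β, Measurable Ψ ∧ ∀ᵐ z ∂ξ, Ψ (f z) = g z := by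
  classical
  have hF : ∀ n, ∃ F : Set α, MeasurableSet F ∧
      ∀ᵐ z ∂ξ, (g z ∈ natGeneratingSequence β n ↔ f z ∈ F) := fun n => by
    obtain ⟨_, ⟨F, hF, rfl⟩, hnull⟩ := h _ ⟨_, measurableSet_natGeneratingSequence n, rfl⟩
    exact ⟨F, hF, eventuallyEq_set.1 (measure_symmDiff_eq_zero_iff.1 hnull)⟩
  choose F hFm hFae using hF
  obtain ⟨r, hr, hre⟩ := ((measurable_mapNatBool β).measurableEmbedding
    (injective_mapNatBool β)).exists_measurable_extend measurable_id fun _ => inferInstance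
  let c : α → ℕ → Bool := fun x n => x ∈ F n
  have hc : Measurable c := measurable_pi_iff.2 fun n => measurable_to_bool <| by
    simpa [c, Set.preimage] using hFm n
  refine ⟨r ∘ c, hr.comp hc, ?_⟩
  filter_upwards [ae_all_iff.2 hFae] with z hz
  have hcode : c (f z) = mapNatBool β (g z) := funext fun n => by
    simp only [c, mapNatBool, hz n]
  simpa [hcode] using congrFun hre (g z)

theorem measurableEmbedding_graph {α β : Type*} [MeasurableSpace α] [MeasurableSpace β]
    [MeasurableEq β] {Ψ : α → β} (hΨ : Measurable Ψ) :
    MeasurableEmbedding fun x => (x, Ψ x) := by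
  have hrange : Set.range (fun x => (x, Ψ x)) = {z | Ψ z.1 = z.2} := by
    ext ⟨x, y⟩
    simp [eq_comm]
  refine .of_measurable_inverse (measurable_id.prodMk hΨ) ?_ measurable_fst fun _ => rfl
  rw [hrange]
  exact measurableSet_eq_fun (hΨ.comp measurable_fst) measurable_snd

theorem MeasureTheory.Measure.eq_map_graph_of_ae_eq {α β : Type*} [MeasurableSpace α]
    [MeasurableSpace β] {ξ : Measure (α × β)} {Ψ : α → β} (hΨ : Measurable Ψ) (h : ∀ᵐ z ∂ξ, Ψ z.1 = z.2) :
    ξ = (ξ.map Prod.fst).map fun x => (x, Ψ x) := by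
  rw [Measure.map_map (by fun_prop) measurable_fst]
  calc ξ = ξ.map id := Measure.map_id.symm
    _ = _ := Measure.map_congr <| by
      filter_upwards [h] with z hz
      simp [hz]

theorem isMeasEmbedding_of_ae {α β : Type*} [MeasurableSpace α] [MeasurableSpace β]
    {μ : Measure α} {T : α → α} {S : β → β} {Ψ : α → β} {Φ : β → α} (hΨ : Measurable Ψ)
    (hΦΨ : ∀ᵐ x ∂μ, Φ (Ψ x) = x) (hΨT : ∀ᵐ x ∂μ, Ψ (T x) = S (Ψ x)) :
    IsMeasEmbedding μ T S Ψ := by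
  obtain ⟨X', hX'ae, hX', hgood⟩ := (hΦΨ.and hΨT).exists_measurable_mem
  refine ⟨hΨ, X', hX', hX'ae, fun x hx y hy hxy => ?_, fun x hx => (hgood x hx).2⟩
  rw [← (hgood x hx).1, hxy, (hgood y hy).1]

theorem exists_isMeasEmbedding_of_subAlgMod {α β : Type*} [mα : MeasurableSpace α]
    [StandardBorelSpace α] [mβ : MeasurableSpace β] [StandardBorelSpace β]
    {T : α → α} {S : β → β} {ξ : Measure (α × β)} [NeZero ξ]
    (hξ : Measure.QuasiMeasurePreserving (Prod.map T S) ξ ξ)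
    (hsnd : SubAlgMod ξ (mβ.comap Prod.snd) (mα.comap Prod.fst))
    (hfst : SubAlgMod ξ (mα.comap Prod.fst) (mβ.comap Prod.snd)) :
    ∃ Ψ : α → β, IsMeasEmbedding (ξ.map Prod.fst) T S Ψ ∧
      ξ = (ξ.map Prod.fst).map fun x => (x, Ψ x) := by
  obtain ⟨a, b⟩ := Measure.nonempty_of_neZero ξ
  have : Nonempty α := ⟨a⟩
  have : Nonempty β := ⟨b⟩
  obtain ⟨Ψ, hΨm, hΨ⟩ := exists_measurable_ae_comp_eq_of_subAlgMod hsnd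
  obtain ⟨Φ, -, hΦ⟩ := exists_measurable_ae_comp_eq_of_subAlgMod hfst
  have hgraph := Measure.eq_map_graph_of_ae_eq hΨm hΨ
  have descend {P : α → Prop} (h : ∀ᵐ z ∂ξ, P z.1) : ∀ᵐ x ∂ξ.map Prod.fst, P x := by
    rw [hgraph] at h
    exact (measurableEmbedding_graph hΨm).ae_map_iff.1 h
  refine ⟨Ψ, isMeasEmbedding_of_ae hΨm (Φ := Φ) (descend ?_) (descend ?_), hgraph⟩
  · filter_upwards [hΨ, hΦ] with z hΨz hΦz
    rw [hΨz, hΦz]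
  · filter_upwards [hΨ, hξ.ae hΨ] with z hΨz hΨTz
    rw [hΨz]
    exact hΨTz

theorem subAlgMod_map_graph_snd_fst {α β : Type*} [mα : MeasurableSpace α]
    [mβ : MeasurableSpace β] {μ : Measure α} {Ψ : α → β} (hΨ : Measurable Ψ) :
    SubAlgMod (μ.map fun x => (x, Ψ x)) (mβ.comap Prod.snd) (mα.comap Prod.fst) := by
  rintro _ ⟨B, hB, rfl⟩
  refine ⟨Prod.fst ⁻¹' (Ψ ⁻¹' B), ⟨_, hΨ hB, rfl⟩, ?_⟩
  rw [Measure.map_apply (by fun_prop) ((measurable_snd hB).symmDiff (measurable_fst (hΨ hB))),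
    Set.preimage_symmDiff]
  exact (congrArg μ (symmDiff_self _)).trans measure_empty

theorem subAlgMod_map_graph_fst_snd {α β : Type*} [mα : MeasurableSpace α]
    [StandardBorelSpace α] [mβ : MeasurableSpace β] [CountablySeparated β]
    {μ : Measure α} {Ψ : α → β} {X' : Set α} (hΨ : Measurable Ψ) (hX' : MeasurableSet X')
    (hX'null : μ X'ᶜ = 0) (hinj : Set.InjOn Ψ X') :
    SubAlgMod (μ.map fun x => (x, Ψ x)) (mα.comap Prod.fst) (mβ.comap Prod.snd) := by
  rintro _ ⟨F, hF, rfl⟩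
  have hB : MeasurableSet (Ψ '' (F ∩ X')) :=
    (hF.inter hX').image_of_measurable_injOn hΨ (hinj.mono Set.inter_subset_right)
  refine ⟨Prod.snd ⁻¹' (Ψ '' (F ∩ X')), ⟨_, hB, rfl⟩, ?_⟩
  rw [Measure.map_apply (by fun_prop) ((measurable_fst hF).symmDiff (measurable_snd hB))]
  refine measure_mono_null ?_ hX'null
  rintro x hx (hxX' : x ∈ X')
  simp only [Set.preimage_symmDiff, Set.mem_symmDiff, Set.mem_preimage, Set.mem_image] at hx
  rcases hx with ⟨hxF, hxB⟩ | ⟨⟨y, ⟨hyF, hyX'⟩, hyx⟩, hxF⟩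
  · exact hxB ⟨x, ⟨hxF, hxX'⟩, rfl⟩
  · exact hxF (hinj hyX' hxX' hyx ▸ hyF)

theorem joining_embedding_correspondence_general
    (k : ℕ) (Xs : Set (ℤ → Fin k)) (hcl : IsClosed Xs)
    (σX : ↥Xs ≃ ↥Xs)
    (μ : Measure ↥Xs)
    {Y : Type*} [MetricSpace Y] [CompactSpace Y] [MeasurableSpace Y] [BorelSpace Y]
    (S : Y ≃ₜ Y) :
    (∀ ξ : Measure (↥Xs × Y), IsProbabilityMeasure ξ →
      MeasurePreserving (Prod.map (⇑σX) (⇑S)) ξ ξ → ξ.map Prod.fst = μ →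
      SubAlgMod ξ (MeasurableSpace.comap Prod.snd inferInstance)
        (MeasurableSpace.comap Prod.fst inferInstance) →
      SubAlgMod ξ (MeasurableSpace.comap Prod.fst inferInstance)
        (MeasurableSpace.comap Prod.snd inferInstance) →
      ∃ Ψ : ↥Xs → Y, IsMeasEmbedding μ (⇑σX) (⇑S) Ψ ∧
        ∀ (F : Set ↥Xs) (B : Set Y), MeasurableSet F → MeasurableSet B →
          ξ (F ×ˢ B) = μ (F ∩ Ψ ⁻¹' B)) ∧
    (∀ Ψ : ↥Xs → Y, IsMeasEmbedding μ (⇑σX) (⇑S) Ψ →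
      SubAlgMod (μ.map fun x => (x, Ψ x)) (MeasurableSpace.comap Prod.snd inferInstance)
        (MeasurableSpace.comap Prod.fst inferInstance) ∧
      SubAlgMod (μ.map fun x => (x, Ψ x)) (MeasurableSpace.comap Prod.fst inferInstance)
        (MeasurableSpace.comap Prod.snd inferInstance)) := by
  have : CompleteSpace (ℤ → Fin k) := complete_of_compact
  have : PolishSpace (ℤ → Fin k) := {}
  have : PolishSpace Xs := hcl.polishSpace
  refine ⟨fun ξ _ hξ hμ hsnd hfst => ?_, fun Ψ ⟨hΨ, X', hX', hX'null, hinj, _⟩ =>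
    ⟨subAlgMod_map_graph_snd_fst hΨ, subAlgMod_map_graph_fst_snd hΨ hX' hX'null hinj⟩⟩
  obtain ⟨Ψ, hemb, hgraph⟩ :=
    exists_isMeasEmbedding_of_subAlgMod hξ.quasiMeasurePreserving hsnd hfst
  subst hμ
  refine ⟨Ψ, hemb, fun F B _ _ => ?_⟩
  conv_lhs => rw [hgraph]
  rw [(measurableEmbedding_graph hemb.1).map_apply, Set.mk_preimage_prod, Set.preimage_id']

/-- **Joinings satisfying the two σ-algebra containment conditions are exactly the
embeddings.**  Let `(Xs, μ, σX)` be a non-trivial ergodic subshift and `S` a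
self-homeomorphism of a compact metric space `Y`.  If a `μ`-joining `ξ` satisfies
`T_X ⊗ B ⊆ F ⊗ T_Y mod ξ` and `F ⊗ T_Y ⊆ T_X ⊗ B mod ξ`, then `ξ` comes from an embedding
`Ψ` of `(Xs, μ, σX)` into `(Y, S)` via `ξ(F × B) = μ(F ∩ Ψ⁻¹ B)`; conversely, the measure
associated in this way with any embedding satisfies both conditions. -/
theorem joining_embedding_correspondence
    (k : ℕ) (Xs : Set (ℤ → Fin k)) (hne : Xs.Nonempty) (hcl : IsClosed Xs)
    (hsinv : fullShift '' Xs = Xs) (hnontriv : ¬ Xs.Finite)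
    (σX : ↥Xs ≃ ↥Xs) (hσ : ∀ x : ↥Xs, (σX x : ℤ → Fin k) = fullShift (x : ℤ → Fin k))
    (μ : Measure ↥Xs) [IsProbabilityMeasure μ] (herg : Ergodic (⇑σX) μ)
    {Y : Type*} [MetricSpace Y] [CompactSpace Y] [MeasurableSpace Y] [BorelSpace Y]
    (S : Y ≃ₜ Y) :
    (∀ ξ : Measure (↥Xs × Y), IsProbabilityMeasure ξ →
      MeasurePreserving (Prod.map (⇑σX) (⇑S)) ξ ξ → ξ.map Prod.fst = μ →
      SubAlgMod ξ (MeasurableSpace.comap Prod.snd inferInstance)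
        (MeasurableSpace.comap Prod.fst inferInstance) →
      SubAlgMod ξ (MeasurableSpace.comap Prod.fst inferInstance)
        (MeasurableSpace.comap Prod.snd inferInstance) →
      ∃ Ψ : ↥Xs → Y, IsMeasEmbedding μ (⇑σX) (⇑S) Ψ ∧
        ∀ (F : Set ↥Xs) (B : Set Y), MeasurableSet F → MeasurableSet B →
          ξ (F ×ˢ B) = μ (F ∩ Ψ ⁻¹' B)) ∧
    (∀ Ψ : ↥Xs → Y, IsMeasEmbedding μ (⇑σX) (⇑S) Ψ →
      SubAlgMod (μ.map fun x => (x, Ψ x)) (MeasurableSpace.comap Prod.snd inferInstance)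
        (MeasurableSpace.comap Prod.fst inferInstance) ∧
      SubAlgMod (μ.map fun x => (x, Ψ x)) (MeasurableSpace.comap Prod.fst inferInstance)
        (MeasurableSpace.comap Prod.snd inferInstance)) :=
  joining_embedding_correspondence_general k Xs hcl σX μ S
end

section
/- In the setting below, for each n, ℓ ≥ 1 the set E^{n,ℓ}_μ consisting of joinings ξ ∈ M_0 satisfying (i) T_X ⊗ σ(Q_ℓ) ⊆^{1/n} (⋁_{i∈Z} T^{−i}P) ⊗ T_Y mod ξ and (ii) σ(P) ⊗ T_Y ⊆^{1/n} T_X ⊗ ⋁_{i∈Z} S^{−i}Q_ℓ mod ξ is a relatively open subset of M_0 in the weak* topology. -/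
open MeasureTheory Filter Set
open scoped ENNReal

/-- Shannon entropy of the finite-valued observable `P` with respect to `μ`. -/
noncomputable def infoEntropy {X : Type*} [MeasurableSpace X] (μ : Measure X)
    {α : Type*} [Fintype α] (P : X → α) : ℝ :=
  ∑ a : α, Real.negMulLog (μ (P ⁻¹' {a})).toReal

/-- Entropy of the transformation `T` with respect to the observable (finite partition) `P`. -/
noncomputable def entropyWrt {X : Type*} [MeasurableSpace X] (μ : Measure X) (T : X → X)
    {α : Type*} [Fintype α] (P : X → α) : ℝ :=
  Filter.atTop.liminf fun n : ℕ =>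
    infoEntropy μ (fun x => fun i : Fin n => P (T^[(i : ℕ)] x)) / n

/-- Kolmogorov–Sinai (measure-theoretic) entropy of `T` with respect to `μ`. -/
noncomputable def ksEntropy {X : Type*} [MeasurableSpace X] (μ : Measure X) (T : X → X) : ℝ≥0∞ :=
  ⨆ (k : ℕ) (P : X → Fin k) (_ : Measurable P), ENNReal.ofReal (entropyWrt μ T P)

/-- Topological entropy (Bowen–Dinaburg, via dynamical covers). -/
noncomputable def topEntropy {Y : Type*} [UniformSpace Y] (S : Y → Y) : EReal :=
  Dynamics.coverEntropy S Set.univ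

/-- `L` is a gap function for the invertible system `S` at scale `ε`. -/
def IsGapFunction {Y : Type*} [MetricSpace Y] (S : Y ≃ Y) (ε : ℝ) (L : ℕ → ℕ) : Prop :=
  Monotone L ∧ (∀ m, 0 < L m) ∧
    ∀ (n : ℕ) (y : Fin n → Y) (a b : Fin n → ℤ),
      (∀ i, a i ≤ b i) →
      (∀ i j : Fin n, (i : ℕ) + 1 = (j : ℕ) → (L (b j - a j).toNat : ℤ) ≤ a j - b i) →
      ∃ z : Y, ∀ (i : Fin n) (kk : ℤ), a i ≤ kk → kk ≤ b i →
        dist ((S ^ kk) z) ((S ^ kk) (y i)) ≤ ε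

/-- Almost weak specification: for every `ε > 0` there is a sublinear gap function. -/
def AlmostWeakSpec {Y : Type*} [MetricSpace Y] (S : Y ≃ Y) : Prop :=
  ∀ ε : ℝ, 0 < ε → ∃ L : ℕ → ℕ, IsGapFunction S ε L ∧
    Filter.Tendsto (fun m : ℕ => (L m : ℝ) / m) Filter.atTop (nhds 0)

/-- A measure on a topological space has full support. -/
def FullSupport {Y : Type*} [TopologicalSpace Y] [MeasurableSpace Y] (ν : Measure Y) : Prop :=
  ∀ U : Set Y, IsOpen U → U.Nonempty → 0 < ν U

/-- The space `M₀` of ergodic `μ`-joinings `ξ` of `(Xs, μ, σX)` and `(Y, S)` satisfying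
`h_{π₂*ξ}(S) ≥ h_μ(σX)`. -/
def joiningM0 {k : ℕ} (Xs : Set (ℤ → Fin k)) (σX : ↥Xs ≃ ↥Xs) (μ : Measure ↥Xs)
    {Y : Type*} [MetricSpace Y] [MeasurableSpace Y] (S : Y ≃ₜ Y) :
    Set (ProbabilityMeasure (↥Xs × Y)) :=
  {ξ | (ξ : Measure (↥Xs × Y)).map Prod.fst = μ ∧
    Ergodic (Prod.map (⇑σX) (⇑S)) (ξ : Measure (↥Xs × Y)) ∧
    ksEntropy μ (⇑σX) ≤ ksEntropy ((ξ : Measure (↥Xs × Y)).map Prod.snd) (⇑S)}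

open scoped symmDiff

/-- A finite measurable partition of the whole space. -/
def IsFinPartition {Y : Type*} [MeasurableSpace Y] (P : Finset (Set Y)) : Prop :=
  (∀ s ∈ P, MeasurableSet s) ∧ ⋃₀ (P : Set (Set Y)) = Set.univ ∧
    (P : Set (Set Y)).Pairwise (Disjoint · ·)

/-- `m₁ ⊆^ε m₂ mod ξ`: every `m₁`-measurable set agrees with an `m₂`-measurable set up to a
symmetric difference of `ξ`-measure < `ε`. -/
def SubAlgModLt {Z : Type*} [MeasurableSpace Z] (ξ : Measure Z)
    (m₁ m₂ : MeasurableSpace Z) (ε : ℝ) : Prop :=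
  ∀ s : Set Z, MeasurableSet[m₁] s →
    ∃ t : Set Z, MeasurableSet[m₂] t ∧ ξ (s ∆ t) < ENNReal.ofReal ε

/-- The σ-algebra `σ(P)` generated by the natural (zeroth-coordinate) partition of a
subshift. -/
def natPartAlg (k : ℕ) (Xs : Set (ℤ → Fin k)) : MeasurableSpace ↥Xs :=
  MeasurableSpace.comap (fun x : ↥Xs => (x : ℤ → Fin k) 0) ⊤

/-- The σ-algebra `⋁_{i ∈ ℤ} T^{-i} P` generated by all shifted copies of the natural
partition of a subshift. -/
def natPartOrbitAlg (k : ℕ) (Xs : Set (ℤ → Fin k)) (σX : ↥Xs ≃ ↥Xs) :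
    MeasurableSpace ↥Xs :=
  ⨆ i : ℤ, MeasurableSpace.comap (fun x : ↥Xs => (((σX ^ i) x : ℤ → Fin k)) 0) ⊤

/-- The σ-algebra `σ(Q)` generated by a finite partition `Q`. -/
def partAlg {Y : Type*} (Q : Finset (Set Y)) : MeasurableSpace Y :=
  MeasurableSpace.generateFrom ↑Q

/-- The σ-algebra `⋁_{i ∈ ℤ} S^{-i} Q` generated by all iterates of a finite partition `Q`
under the invertible map `S`. -/
def partOrbitAlg {Y : Type*} (S : Y ≃ Y) (Q : Finset (Set Y)) : MeasurableSpace Y :=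
  ⨆ i : ℤ, MeasurableSpace.comap (⇑(S ^ i)) (partAlg Q)

/-- The set `E^{n,ℓ}_μ` of `1/n`-approximate embeddings (at partition scale `ℓ`): joinings
`ξ ∈ M₀` with `T_X ⊗ σ(Q_ℓ) ⊆^{1/n} (⋁_i T^{-i}P) ⊗ T_Y mod ξ` and
`σ(P) ⊗ T_Y ⊆^{1/n} T_X ⊗ ⋁_i S^{-i}Q_ℓ mod ξ`. -/
def approxEmbeddings {k : ℕ} (Xs : Set (ℤ → Fin k)) (σX : ↥Xs ≃ ↥Xs) (μ : Measure ↥Xs)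
    {Y : Type*} [MetricSpace Y] [MeasurableSpace Y] (S : Y ≃ₜ Y) (Q : ℕ → Finset (Set Y))
    (n ℓ : ℕ) : Set (ProbabilityMeasure (↥Xs × Y)) :=
  {ξ ∈ joiningM0 Xs σX μ S |
    SubAlgModLt (ξ : Measure (↥Xs × Y))
      (MeasurableSpace.comap Prod.snd (partAlg (Q ℓ)))
      (MeasurableSpace.comap Prod.fst (natPartOrbitAlg k Xs σX)) (1 / n) ∧
    SubAlgModLt (ξ : Measure (↥Xs × Y))
      (MeasurableSpace.comap Prod.fst (natPartAlg k Xs))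
      (MeasurableSpace.comap Prod.snd (partOrbitAlg S.toEquiv (Q ℓ))) (1 / n)}

/-! Each of the two conditions defining `E^{n,ℓ}_μ` quantifies over finitely many sets `s`
(unions of cells of `Q_ℓ`, resp. zero-coordinate cylinders), and for `ξ₀ ∈ M₀` each of them has
`ξ₀`-null frontier: the `Y`-marginal of an ergodic joining is `S`-invariant, so the small boundary
property applies. The target σ-algebras are generated by sets with `ξ₀`-null frontier (clopen
cylinders, resp. sets `S^{-i} q` with `q ∈ Q_ℓ`, by invariance), so the witness `t` with
`ξ₀(s ∆ t) < 1/n` may be chosen with null frontier. Then `s ∆ t` is a continuity set of `ξ₀`, and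
by the portmanteau theorem `ξ(s ∆ t) < 1/n` for all `ξ` near `ξ₀`. -/

open Topology

section Frontier

variable {Z : Type*} [TopologicalSpace Z] {mZ : MeasurableSpace Z} {μ : Measure Z} {s t : Set Z}

theorem null_frontier_compl (h : μ (frontier s) = 0) : μ (frontier sᶜ) = 0 := by
  rwa [frontier_compl]

theorem null_frontier_union (hs : μ (frontier s) = 0) (ht : μ (frontier t) = 0) :
    μ (frontier (s ∪ t)) = 0 := by
  rw [← compl_compl (s ∪ t), compl_union]
  exact null_frontier_compl (null_frontier_inter (null_frontier_compl hs) (null_frontier_compl ht))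

theorem null_frontier_diff (hs : μ (frontier s) = 0) (ht : μ (frontier t) = 0) :
    μ (frontier (s \ t)) = 0 :=
  null_frontier_inter hs (null_frontier_compl ht)

theorem null_frontier_symmDiff (hs : μ (frontier s) = 0) (ht : μ (frontier t) = 0) :
    μ (frontier (s ∆ t)) = 0 :=
  null_frontier_union (null_frontier_diff hs ht) (null_frontier_diff ht hs)

theorem null_frontier_sUnion {𝒮 : Set (Set Z)} (h𝒮 : 𝒮.Finite)
    (h : ∀ q ∈ 𝒮, μ (frontier q) = 0) : μ (frontier (⋃₀ 𝒮)) = 0 := by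
  induction 𝒮, h𝒮 using Set.Finite.induction_on with
  | empty => simp
  | insert _ _ ih =>
    rw [sUnion_insert]
    exact null_frontier_union (h _ (mem_insert _ _))
      (ih fun q hq => h q (mem_insert_of_mem _ hq))

theorem isSetRing_measurableSet_null_frontier (μ : Measure Z) (m : MeasurableSpace Z) :
    IsSetRing {t | MeasurableSet[m] t ∧ μ (frontier t) = 0} where
  empty_mem := ⟨@MeasurableSet.empty _ m, by simp⟩
  union_mem _ _ hs ht := ⟨hs.1.union ht.1, null_frontier_union hs.2 ht.2⟩
  sdiff_mem _ _ hs ht := ⟨hs.1.diff ht.1, null_frontier_diff hs.2 ht.2⟩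

end Frontier

theorem null_frontier_preimage {Z W : Type*} [TopologicalSpace Z] [MeasurableSpace Z]
    [OpensMeasurableSpace Z] [TopologicalSpace W] [MeasurableSpace W] [BorelSpace W]
    {μ : Measure Z} {g : Z → W} (hg : Continuous g) {u : Set W}
    (hu : μ.map g (frontier u) = 0) : μ (frontier (g ⁻¹' u)) = 0 := by
  rw [Measure.map_apply hg.measurable isClosed_frontier.measurableSet] at hu
  exact measure_mono_null (hg.frontier_preimage_subset u) hu

theorem exists_null_frontier_measure_symmDiff_lt {Z : Type*} [TopologicalSpace Z]
    {m : MeasurableSpace Z} [mZ : MeasurableSpace Z] (μ : Measure Z) [IsFiniteMeasure μ]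
    {C : Set (Set Z)} (hm : m = MeasurableSpace.generateFrom C)
    (hC : ∀ c ∈ C, MeasurableSet c ∧ μ (frontier c) = 0) {s : Set Z} (hs : MeasurableSet[m] s)
    {ε : ℝ≥0∞} (hε : 0 < ε) :
    ∃ t, MeasurableSet[m] t ∧ μ (frontier t) = 0 ∧ μ (t ∆ s) < ε := by
  have hle : m ≤ mZ := by
    rw [hm]; exact MeasurableSpace.generateFrom_le fun c hc => (hC c hc).1
  have hgen : m = MeasurableSpace.generateFrom {t | MeasurableSet[m] t ∧ μ (frontier t) = 0} :=
    le_antisymm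
      (hm ▸ MeasurableSpace.generateFrom_mono fun c hc =>
        ⟨MeasurableSpace.measurableSet_generateFrom hc, (hC c hc).2⟩)
      (MeasurableSpace.generateFrom_le fun _ ht => ht.1)
  obtain ⟨t, ⟨ht, hfr⟩, hlt⟩ := exists_measure_symmDiff_lt_of_generateFrom_isSetRing
    (mα := m) (μ := μ.trim hle) (isSetRing_measurableSet_null_frontier μ m)
    ⟨{univ}, countable_singleton _, by simp, by simp⟩ hgen hs hε
  exact ⟨t, ht, hfr, by rwa [trim_measurableSet_eq hle (ht.symmDiff hs)] at hlt⟩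

theorem exists_isOpen_eq_inter_of_eventually {X : Type*} [TopologicalSpace X] {E M : Set X}
    (hEM : E ⊆ M) (h : ∀ x ∈ E, ∀ᶠ y in 𝓝 x, y ∈ M → y ∈ E) :
    ∃ U : Set X, IsOpen U ∧ E = U ∩ M :=
  ⟨{x | ∀ᶠ y in 𝓝 x, y ∈ M → y ∈ E}, isOpen_setOfPred_eventually_nhds,
    Subset.antisymm (fun x hx => ⟨h x hx, hEM hx⟩) fun _ ⟨hx, hxM⟩ => hx.self_of_nhds hxM⟩

section Portmanteau

variable {Z : Type*} [TopologicalSpace Z] [HasOuterApproxClosed Z] {m₁ m₂ : MeasurableSpace Z}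
  [MeasurableSpace Z] [OpensMeasurableSpace Z]

theorem MeasureTheory.ProbabilityMeasure.eventually_measure_lt_of_null_frontier
    {ξ₀ : ProbabilityMeasure Z} {s : Set Z} (hs : (ξ₀ : Measure Z) (frontier s) = 0) {c : ℝ≥0∞}
    (hc : (ξ₀ : Measure Z) s < c) :
    ∀ᶠ ξ : ProbabilityMeasure Z in 𝓝 ξ₀, (ξ : Measure Z) s < c :=
  (tendsto_measure_of_null_frontier_of_tendsto' tendsto_id hs).eventually_lt_const hc

theorem MeasureTheory.ProbabilityMeasure.eventually_subAlgModLt {C : Set (Set Z)}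
    {ξ₀ : ProbabilityMeasure Z} (h₁fin : {s | MeasurableSet[m₁] s}.Finite)
    (h₁ : ∀ s, MeasurableSet[m₁] s → (ξ₀ : Measure Z) (frontier s) = 0)
    (hm₂ : m₂ = MeasurableSpace.generateFrom C)
    (hC : ∀ c ∈ C, MeasurableSet c ∧ (ξ₀ : Measure Z) (frontier c) = 0) {ε : ℝ}
    (h : SubAlgModLt ξ₀ m₁ m₂ ε) : ∀ᶠ ξ : ProbabilityMeasure Z in 𝓝 ξ₀, SubAlgModLt ξ m₁ m₂ ε := by
  have key : ∀ s ∈ {s | MeasurableSet[m₁] s}, ∀ᶠ ξ : ProbabilityMeasure Z in 𝓝 ξ₀,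
      ∃ t, MeasurableSet[m₂] t ∧ (ξ : Measure Z) (s ∆ t) < ENNReal.ofReal ε := by
    intro s hs
    obtain ⟨t, ht, hst⟩ := h s hs
    obtain ⟨t', ht', hfr, htt'⟩ :=
      exists_null_frontier_measure_symmDiff_lt (ξ₀ : Measure Z) hm₂ hC ht (tsub_pos_of_lt hst)
    have hst' : (ξ₀ : Measure Z) (s ∆ t') < ENNReal.ofReal ε :=
      calc (ξ₀ : Measure Z) (s ∆ t')
          ≤ (ξ₀ : Measure Z) (s ∆ t) + (ξ₀ : Measure Z) (t' ∆ t) := by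
            rw [symmDiff_comm t']; exact measure_symmDiff_le _ _ _
        _ < ENNReal.ofReal ε := lt_tsub_iff_left.mp htt'
    filter_upwards [eventually_measure_lt_of_null_frontier (null_frontier_symmDiff (h₁ s hs) hfr)
      hst'] with ξ hξ using ⟨t', ht', hξ⟩
  filter_upwards [h₁fin.eventually_all.mpr key] with ξ hξ s hs using hξ s hs

end Portmanteau

theorem MeasureTheory.MeasurePreserving.map_snd {X Y : Type*} [MeasurableSpace X]
    [MeasurableSpace Y]
    {ξ : Measure (X × Y)} {f : X → X} {g : Y → Y} (h : MeasurePreserving (Prod.map f g) ξ ξ)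
    (hg : Measurable g) : MeasurePreserving g (ξ.map Prod.snd) (ξ.map Prod.snd) := by
  refine ⟨hg, ?_⟩
  rw [Measure.map_map hg measurable_snd, ← Prod.map_snd',
    ← Measure.map_map measurable_snd h.measurable, h.map_eq]

theorem MeasurableEquiv.measurePreserving_zpow {X : Type*} [MeasurableSpace X] {μ : Measure X}
    (e : X ≃ᵐ X) (he : MeasurePreserving e μ μ) (i : ℤ) :
    MeasurePreserving ⇑(e.toEquiv ^ i) μ μ := by
  induction i using Int.induction_on with
  | zero => exact MeasurePreserving.id μ
  | succ j ih => rw [zpow_add_one, Equiv.Perm.coe_mul]; exact ih.comp he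
  | pred j ih => rw [zpow_sub_one, Equiv.Perm.coe_mul]; exact ih.comp (he.symm e)

theorem finite_measurableSet_comap {Z W : Type*} (g : Z → W) {m : MeasurableSpace W}
    (h : {u | MeasurableSet[m] u}.Finite) : {s | MeasurableSet[m.comap g] s}.Finite :=
  (h.image (g ⁻¹' ·)).subset fun _ ⟨u, hu, hs⟩ => ⟨u, hu, hs⟩

theorem MeasurableSpace.comap_iSup_comap_generateFrom {Z W ι α : Type*} (g : Z → W)
    (f : ι → W → α) (C : ι → Set (Set α)) :
    (⨆ i, (generateFrom (C i)).comap (f i)).comap g =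
      generateFrom (⋃ i, (fun c => g ⁻¹' (f i ⁻¹' c)) '' C i) := by
  simp only [comap_iSup, comap_generateFrom, image_image, ← iSup_generateFrom]

section Partition

variable {Y : Type*} {𝒬 : Set (Set Y)}

theorem compl_sUnion_eq_sUnion_sdiff (hcover : ⋃₀ 𝒬 = univ) (hdisj : 𝒬.Pairwise (Disjoint · ·))
    {𝒮 : Set (Set Y)} (h𝒮 : 𝒮 ⊆ 𝒬) : (⋃₀ 𝒮)ᶜ = ⋃₀ (𝒬 \ 𝒮) := by
  ext y
  simp only [mem_compl_iff, mem_sUnion, Set.mem_sdiff, not_exists, not_and]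
  constructor
  · intro hy
    obtain ⟨q, hq, hyq⟩ := mem_sUnion.mp (hcover ▸ mem_univ y)
    exact ⟨q, ⟨hq, fun hq𝒮 => hy q hq𝒮 hyq⟩, hyq⟩
  · rintro ⟨q, ⟨hq, hq𝒮⟩, hyq⟩ q' hq'𝒮 hyq'
    have hne : q ≠ q' := fun h => hq𝒮 (h ▸ hq'𝒮)
    exact disjoint_left.mp (hdisj hq (h𝒮 hq'𝒮) hne) hyq hyq'

theorem exists_sUnion_eq_of_measurableSet_generateFrom (hcover : ⋃₀ 𝒬 = univ)
    (hdisj : 𝒬.Pairwise (Disjoint · ·)) {u : Set Y}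
    (hu : MeasurableSet[MeasurableSpace.generateFrom 𝒬] u) : ∃ 𝒮 ⊆ 𝒬, u = ⋃₀ 𝒮 := by
  induction u, hu using MeasurableSpace.generateFrom_induction with
  | hC q hq => exact ⟨{q}, singleton_subset_iff.mpr hq, sUnion_singleton q |>.symm⟩
  | empty => exact ⟨∅, empty_subset _, sUnion_empty.symm⟩
  | compl u _ ih =>
    obtain ⟨𝒮, h𝒮, rfl⟩ := ih
    exact ⟨𝒬 \ 𝒮, sdiff_subset, compl_sUnion_eq_sUnion_sdiff hcover hdisj h𝒮⟩
  | iUnion u _ ih =>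
    choose 𝒮 h𝒮 hu using ih
    exact ⟨⋃ n, 𝒮 n, iUnion_subset h𝒮, by rw [sUnion_iUnion]; exact iUnion_congr hu⟩

end Partition

theorem coe_zpow_apply_of_eq_fullShift {A : Type*} {Xs : Set (ℤ → A)} {σX : Xs ≃ Xs}
    (hσ : ∀ x : Xs, (σX x : ℤ → A) = fullShift (x : ℤ → A)) (i : ℤ) (x : Xs) (m : ℤ) :
    ((σX ^ i) x : ℤ → A) m = (x : ℤ → A) (m + i) := by
  have hinv : ∀ (y : Xs) (m : ℤ), ((σX⁻¹ y : Xs) : ℤ → A) m = (y : ℤ → A) (m - 1) := by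
    intro y m
    conv_rhs => rw [← σX.apply_symm_apply y, hσ, fullShift, sub_add_cancel]
    rfl
  induction i using Int.induction_on generalizing x m with
  | zero => simp
  | succ j ih =>
    rw [zpow_add_one, Equiv.Perm.mul_apply, ih, hσ, fullShift, add_assoc]
  | pred j ih =>
    rw [zpow_sub_one, Equiv.Perm.mul_apply, ih, hinv, add_sub_assoc]

theorem natPartOrbitAlg_eq_iSup_comap_coord {k : ℕ} {Xs : Set (ℤ → Fin k)} {σX : Xs ≃ Xs}
    (hσ : ∀ x : Xs, (σX x : ℤ → Fin k) = fullShift (x : ℤ → Fin k)) :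
    natPartOrbitAlg k Xs σX =
      ⨆ i : ℤ, MeasurableSpace.comap (fun x : Xs => (x : ℤ → Fin k) i) ⊤ := by
  simp only [natPartOrbitAlg, coe_zpow_apply_of_eq_fullShift hσ, zero_add]

theorem Homeomorph.continuous_toEquiv_zpow {Y : Type*} [TopologicalSpace Y] (S : Y ≃ₜ Y)
    (i : ℤ) : Continuous ⇑(S.toEquiv ^ i) := by
  induction i using Int.induction_on with
  | zero => exact continuous_id
  | succ j ih => rw [zpow_add_one, Equiv.Perm.coe_mul]; exact ih.comp S.continuous
  | pred j ih => rw [zpow_sub_one, Equiv.Perm.coe_mul]; exact ih.comp S.symm.continuous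

section Joinings

variable {k : ℕ} {Xs : Set (ℤ → Fin k)} {Y : Type*} [TopologicalSpace Y]
  [TopologicalSpace.PseudoMetrizableSpace Y] [MeasurableSpace Y] [BorelSpace Y]
  {Q : Finset (Set Y)} {ξ₀ : ProbabilityMeasure (Xs × Y)} {ε : ℝ}

theorem eventually_subAlgModLt_partAlg_natPartOrbitAlg {σX : Xs ≃ Xs}
    (hσ : ∀ x : Xs, (σX x : ℤ → Fin k) = fullShift (x : ℤ → Fin k))
    (hcover : ⋃₀ (Q : Set (Set Y)) = univ) (hdisj : (Q : Set (Set Y)).Pairwise (Disjoint · ·))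
    (hbdry : (ξ₀ : Measure (Xs × Y)).map Prod.snd (⋃ q ∈ Q, frontier q) = 0)
    (h : SubAlgModLt ξ₀ (MeasurableSpace.comap Prod.snd (partAlg Q))
      (MeasurableSpace.comap Prod.fst (natPartOrbitAlg k Xs σX)) ε) :
    ∀ᶠ ξ : ProbabilityMeasure (Xs × Y) in 𝓝 ξ₀, SubAlgModLt ξ
      (MeasurableSpace.comap Prod.snd (partAlg Q))
      (MeasurableSpace.comap Prod.fst (natPartOrbitAlg k Xs σX)) ε := by
  have hcells : ∀ u, MeasurableSet[partAlg Q] u → ∃ 𝒮 ⊆ (Q : Set (Set Y)), u = ⋃₀ 𝒮 :=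
    fun u hu => exists_sUnion_eq_of_measurableSet_generateFrom hcover hdisj hu
  have htop : (⊤ : MeasurableSpace (Fin k)) = MeasurableSpace.generateFrom univ :=
    (top_unique fun A _ => MeasurableSpace.measurableSet_generateFrom (mem_univ A)).symm
  have hgen : MeasurableSpace.comap (Prod.fst : Xs × Y → Xs) (natPartOrbitAlg k Xs σX) =
      MeasurableSpace.generateFrom (⋃ i : ℤ,
        (fun A => Prod.fst ⁻¹' ((fun x : Xs => (x : ℤ → Fin k) i) ⁻¹' A)) '' univ) := by
    rw [natPartOrbitAlg_eq_iSup_comap_coord hσ, htop]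
    exact MeasurableSpace.comap_iSup_comap_generateFrom _ _ _
  refine ProbabilityMeasure.eventually_subAlgModLt ?_ ?_ hgen ?_ h
  · refine finite_measurableSet_comap _ <|
      (Q.finite_toSet.finite_subsets.image sUnion).subset fun u hu => ?_
    obtain ⟨𝒮, h𝒮, rfl⟩ := hcells u hu
    exact ⟨𝒮, h𝒮, rfl⟩
  · rintro _ ⟨u, hu, rfl⟩
    obtain ⟨𝒮, h𝒮, rfl⟩ := hcells u hu
    exact null_frontier_preimage continuous_snd <| null_frontier_sUnion
      (Q.finite_toSet.subset h𝒮) fun q hq => measure_mono_null (subset_biUnion_of_mem (h𝒮 hq)) hbdry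
  · intro c hc
    simp only [mem_iUnion, mem_image] at hc
    obtain ⟨i, A, -, rfl⟩ := hc
    have hA : IsClopen (Prod.fst ⁻¹' ((fun x : Xs => (x : ℤ → Fin k) i) ⁻¹' A) : Set (Xs × Y)) :=
      (isClopen_discrete A).preimage
        ((continuous_apply i).comp (continuous_subtype_val.comp continuous_fst))
    exact ⟨hA.isOpen.measurableSet, by rw [hA.frontier_eq, measure_empty]⟩

theorem eventually_subAlgModLt_natPartAlg_partOrbitAlg {S : Y ≃ₜ Y}
    (hQ : ∀ q ∈ Q, MeasurableSet q)
    (hS : MeasurePreserving S ((ξ₀ : Measure (Xs × Y)).map Prod.snd)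
      ((ξ₀ : Measure (Xs × Y)).map Prod.snd))
    (hbdry : (ξ₀ : Measure (Xs × Y)).map Prod.snd (⋃ q ∈ Q, frontier q) = 0)
    (h : SubAlgModLt ξ₀ (MeasurableSpace.comap Prod.fst (natPartAlg k Xs))
      (MeasurableSpace.comap Prod.snd (partOrbitAlg S.toEquiv Q)) ε) :
    ∀ᶠ ξ : ProbabilityMeasure (Xs × Y) in 𝓝 ξ₀, SubAlgModLt ξ
      (MeasurableSpace.comap Prod.fst (natPartAlg k Xs))
      (MeasurableSpace.comap Prod.snd (partOrbitAlg S.toEquiv Q)) ε := by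
  have hP : MeasurableSpace.comap Prod.fst (natPartAlg k Xs) =
      MeasurableSpace.comap (fun p : Xs × Y => (p.1 : ℤ → Fin k) 0) ⊤ :=
    MeasurableSpace.comap_comp
  refine ProbabilityMeasure.eventually_subAlgModLt ?_ ?_
    (MeasurableSpace.comap_iSup_comap_generateFrom _ _ _) ?_ h
  · rw [hP]
    exact finite_measurableSet_comap _ (toFinite _)
  · rw [hP]
    rintro _ ⟨A, -, rfl⟩
    have hcont : Continuous fun p : Xs × Y => (p.1 : ℤ → Fin k) 0 :=
      (continuous_apply 0).comp (continuous_subtype_val.comp continuous_fst)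
    rw [((isClopen_discrete A).preimage hcont).frontier_eq, measure_empty]
  · intro c hc
    simp only [mem_iUnion, mem_image, Finset.mem_coe] at hc
    obtain ⟨i, q, hq, rfl⟩ := hc
    have hSi : MeasurePreserving ⇑(S.toEquiv ^ i) ((ξ₀ : Measure (Xs × Y)).map Prod.snd)
        ((ξ₀ : Measure (Xs × Y)).map Prod.snd) :=
      S.toMeasurableEquiv.measurePreserving_zpow hS i
    refine ⟨measurable_snd (hSi.measurable (hQ q hq)), null_frontier_preimage
      ((S.continuous_toEquiv_zpow i).comp continuous_snd) ?_⟩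
    rw [← Measure.map_map hSi.measurable measurable_snd, hSi.map_eq]
    exact measure_mono_null (subset_biUnion_of_mem hq) hbdry

end Joinings

theorem approxEmbeddings_relatively_open_general
    (k : ℕ) (Xs : Set (ℤ → Fin k))
    (σX : ↥Xs ≃ ↥Xs) (hσ : ∀ x : ↥Xs, (σX x : ℤ → Fin k) = fullShift (x : ℤ → Fin k))
    (μ : Measure ↥Xs)
    {Y : Type*} [MetricSpace Y] [MeasurableSpace Y] [BorelSpace Y]
    (S : Y ≃ₜ Y)
    (Q : ℕ → Finset (Set Y))
    (hQpart : ∀ ℓ, 1 ≤ ℓ → IsFinPartition (Q ℓ))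
    (hQbdry : ∀ ℓ, 1 ≤ ℓ → ∀ ν : Measure Y, IsProbabilityMeasure ν →
      MeasurePreserving (⇑S) ν ν → ν (⋃ s ∈ Q ℓ, frontier s) = 0) :
    ∀ n ℓ : ℕ, 1 ≤ n → 1 ≤ ℓ →
      ∃ U : Set (ProbabilityMeasure (↥Xs × Y)), IsOpen U ∧
        approxEmbeddings Xs σX μ S Q n ℓ = U ∩ joiningM0 Xs σX μ S := by
  rintro n ℓ - hℓ
  obtain ⟨hQmeas, hQcover, hQdisj⟩ := hQpart ℓ hℓ
  refine exists_isOpen_eq_inter_of_eventually (fun ξ hξ => hξ.1) ?_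
  rintro ξ₀ ⟨⟨-, herg, -⟩, h₁, h₂⟩
  have hS : MeasurePreserving S ((ξ₀ : Measure (Xs × Y)).map Prod.snd)
      ((ξ₀ : Measure (Xs × Y)).map Prod.snd) :=
    herg.toMeasurePreserving.map_snd S.continuous.measurable
  have hbdry := hQbdry ℓ hℓ _ (Measure.isProbabilityMeasure_map measurable_snd.aemeasurable) hS
  filter_upwards [eventually_subAlgModLt_partAlg_natPartOrbitAlg hσ hQcover hQdisj hbdry h₁,
    eventually_subAlgModLt_natPartAlg_partOrbitAlg hQmeas hS hbdry h₂] with ξ h₁ h₂ hξ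
  exact ⟨hξ, h₁, h₂⟩

/-- **The sets `E^{n,ℓ}_μ` of `1/n`-approximate embeddings are relatively open in `M₀`** (in
the weak* topology), in the setting of a non-trivial ergodic subshift `(Xs, μ, σX)` and a
self-homeomorphism `S`, with almost weak specification, of a compact metric space `Y` having
the small boundary property witnessed by the refining partitions `Q_ℓ`. -/
theorem approxEmbeddings_relatively_open
    (k : ℕ) (Xs : Set (ℤ → Fin k)) (hne : Xs.Nonempty) (hcl : IsClosed Xs)
    (hsinv : fullShift '' Xs = Xs) (hnontriv : ¬ Xs.Finite)
    (σX : ↥Xs ≃ ↥Xs) (hσ : ∀ x : ↥Xs, (σX x : ℤ → Fin k) = fullShift (x : ℤ → Fin k))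
    (μ : Measure ↥Xs) [IsProbabilityMeasure μ] (herg : Ergodic (⇑σX) μ)
    {Y : Type*} [MetricSpace Y] [CompactSpace Y] [MeasurableSpace Y] [BorelSpace Y]
    (S : Y ≃ₜ Y) (hspec : AlmostWeakSpec S.toEquiv)
    (Q : ℕ → Finset (Set Y))
    (hQpart : ∀ ℓ, 1 ≤ ℓ → IsFinPartition (Q ℓ))
    (hQdiam : ∀ ℓ, 1 ≤ ℓ → ∀ s ∈ Q ℓ, Metric.diam s < 1 / ℓ)
    (hQrefine : ∀ ℓ, 1 ≤ ℓ → ∀ s ∈ Q (ℓ + 1), ∃ t ∈ Q ℓ, s ⊆ t)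
    (hQbdry : ∀ ℓ, 1 ≤ ℓ → ∀ ν : Measure Y, IsProbabilityMeasure ν →
      MeasurePreserving (⇑S) ν ν → ν (⋃ s ∈ Q ℓ, frontier s) = 0)
    (hent : (ksEntropy μ (⇑σX) : EReal) < topEntropy (⇑S)) :
    ∀ n ℓ : ℕ, 1 ≤ n → 1 ≤ ℓ →
      ∃ U : Set (ProbabilityMeasure (↥Xs × Y)), IsOpen U ∧
        approxEmbeddings Xs σX μ S Q n ℓ = U ∩ joiningM0 Xs σX μ S :=
  approxEmbeddings_relatively_open_general k Xs σX hσ μ S Q hQpart hQbdry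
end
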